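/- Let A be an n×n Hermitian positive definite complex matrix with spectrum in [a,b] (0 < a ≤ b), v ∈ ℂ^{n×s}, Ψ = (ψ₁,…,ψ_ℓ) poles with no ψⱼ an eigenvalue of A, U an orthonormal basis of RK_ℓ(A,v,Ψ), A_ℓ := UᴴAU, v_ℓ := Uᴴv. Fix t ≥ 0 and a polynomial p of degree at most ℓ, and set r(z) := p(z)/q(z) with q(z) := ∏_{j: ψⱼ≠∞}(z − ψⱼ). If M, m are reals with m > 0, |r(z)| ≤ M for all z ∈ [a,b], and |r(z)| ≥ m for all z ∈ (−∞,0] that are not poles of r, then ‖(tI+A)⁻¹v − U(tI+A_ℓ)⁻¹v_ℓ‖₂ ≤ (2/(t+a)) · (M/m) · ‖v‖₂. -/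

import Mathlib

open Matrix Polynomial Set MeasureTheory Filter Topology
open scoped ComplexOrder ENNReal NNReal

noncomputable section

/-- The denominator polynomial `q(z) = ∏_{ψⱼ ≠ ∞} (z - ψⱼ)` associated to a tuple of
poles `Ψ`, where `none` encodes the pole at infinity. -/
def qpoly {ℓ : ℕ} (Ψ : Fin ℓ → Option ℂ) : Polynomial ℂ :=
  ∏ j : Fin ℓ, (Ψ j).elim 1 fun ψ => X - C ψ

/-- The rational Krylov subspace `RK_ℓ(A, v, Ψ)`: the span of the columns of
`q(A)⁻¹ Aⁱ v` for `0 ≤ i ≤ ℓ`. -/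
def RK {n s : ℕ} (ℓ : ℕ) (A : Matrix (Fin n) (Fin n) ℂ)
    (v : Matrix (Fin n) (Fin s) ℂ) (Ψ : Fin ℓ → Option ℂ) : Submodule ℂ (Fin n → ℂ) :=
  Submodule.span ℂ
    { x | ∃ i ≤ ℓ, ∃ j, x = ((Polynomial.aeval A (qpoly Ψ))⁻¹ * A ^ i * v)ᵀ j }

/-- The span of the columns of a matrix. -/
def colSpan {n m : ℕ} (U : Matrix (Fin n) (Fin m) ℂ) : Submodule ℂ (Fin n → ℂ) :=
  Submodule.span ℂ (Set.range fun j => Uᵀ j)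

/-- `U` is a matrix with orthonormal columns whose column span is the subspace `W`. -/
def IsONBasisOf {n m : ℕ} (U : Matrix (Fin n) (Fin m) ℂ)
    (W : Submodule ℂ (Fin n → ℂ)) : Prop :=
  Uᴴ * U = 1 ∧ colSpan U = W

/-- The spectral norm (ℓ² operator norm) of a rectangular complex matrix; it is also the
Euclidean norm when the matrix is a single column vector. -/
def norm2 {m n : ℕ} (A : Matrix (Fin m) (Fin n) ℂ) : ℝ :=
  ‖LinearMap.toContinuousLinearMap (Matrix.toEuclideanLin A)‖

/-- The convergence rate `ρ_{[α,β]} = exp(-π² / log(4β/α))`. -/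
def rho (α β : ℝ) : ℝ := Real.exp (-(Real.pi ^ 2) / Real.log (4 * β / α))

/-- The constant `γ_{ℓ,κ} = 2.23 + (2/π)·log(4ℓ·√(κ/π))`. -/
def gammaLK (ℓ : ℕ) (κ : ℝ) : ℝ :=
  2.23 + (2 / Real.pi) * Real.log (4 * ℓ * Real.sqrt (κ / Real.pi))

/-!
Let `T = tI + A`. The Galerkin error operator `E = T⁻¹ - U (Uᴴ T U)⁻¹ Uᴴ` annihilates
`T · range U`, and every column of `g(A) q(A)⁻¹ v` with `deg g ≤ ℓ` lies in `range U`. With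
`κ = q(-t) / p(-t)` (and `κ = 0` if `-t` is a pole) the polynomial `q - κ p` vanishes at `-t`, so
`q = (X + t) P + κ p` with `deg P ≤ ℓ`. Hence `v = T P(A) q(A)⁻¹ v + κ r(A) v` and
`E v = κ E r(A) v`. Finally `‖E‖ ≤ 2 / (t + a)` because `A` and its compression `Uᴴ A U` both have
spectrum in `[a, ∞)`, `‖r(A)‖ ≤ M` by the continuous functional calculus, and `|κ| ≤ 1 / m`.
-/

open scoped Matrix.Norms.L2Operator MatrixOrder

lemma norm2_eq_l2_opNorm {m n : ℕ} (A : Matrix (Fin m) (Fin n) ℂ) : norm2 A = ‖A‖ := rfl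

section CStarAlgebra

variable {A : Type*} [CStarAlgebra A] {a : A}

lemma IsSelfAdjoint.forall_mem_spectrum_of_real (ha : IsSelfAdjoint a) {P : ℂ → Prop}
    (h : ∀ x ∈ spectrum ℝ a, P x) : ∀ z ∈ spectrum ℂ a, P z := fun z hz => by
  have hre := ha.mem_spectrum_eq_re hz
  rw [hre]
  rw [hre, ← Complex.coe_algebraMap] at hz
  exact h _ ((spectrum.algebraMap_mem_iff ℂ).mp hz)

lemma cfc_eval_mul_inv_eval [IsStarNormal a] (f g : ℂ[X])
    (hg : ∀ z ∈ spectrum ℂ a, g.eval z ≠ 0) :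
    cfc (fun z => f.eval z * (g.eval z)⁻¹) a = aeval a f * Ring.inverse (aeval a g) := by
  rw [cfc_mul (fun z => f.eval z) (fun z => (g.eval z)⁻¹) a (by fun_prop)
    (ContinuousOn.inv₀ (by fun_prop) hg), cfc_inv _ a hg, cfc_polynomial f a, cfc_polynomial g a]

lemma IsSelfAdjoint.isUnit_aeval (ha : IsSelfAdjoint a) (g : ℂ[X])
    (hg : ∀ x ∈ spectrum ℝ a, g.eval (x : ℂ) ≠ 0) : IsUnit (aeval a g) := by
  have := ha.isStarNormal
  rw [← cfc_polynomial g a]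
  exact (isUnit_cfc_iff _ a).mpr (ha.forall_mem_spectrum_of_real hg)

lemma IsSelfAdjoint.norm_aeval_mul_inverse_aeval_le (ha : IsSelfAdjoint a) (f g : ℂ[X])
    {C : ℝ} (hC : 0 ≤ C) (hg : ∀ x ∈ spectrum ℝ a, g.eval (x : ℂ) ≠ 0)
    (h : ∀ x ∈ spectrum ℝ a, ‖f.eval (x : ℂ) / g.eval (x : ℂ)‖ ≤ C) :
    ‖aeval a f * Ring.inverse (aeval a g)‖ ≤ C := by
  have := ha.isStarNormal
  rw [← cfc_eval_mul_inv_eval f g (ha.forall_mem_spectrum_of_real hg)]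
  exact norm_cfc_le hC (ha.forall_mem_spectrum_of_real h)

end CStarAlgebra

lemma Polynomial.eval_X_sub_C_neg_ofReal (x t : ℝ) :
    (X - C (-(t : ℂ))).eval (x : ℂ) = ((x + t : ℝ) : ℂ) := by
  simp

lemma Polynomial.exists_eq_X_sub_C_mul_add_C_mul {K : Type*} [CommRing K] {q p : K[X]} {z κ : K}
    {ℓ : ℕ} (hq : q.natDegree ≤ ℓ) (hp : p.natDegree ≤ ℓ) (h : q.eval z = κ * p.eval z) :
    ∃ P : K[X], P.natDegree ≤ ℓ ∧ q = (X - C z) * P + C κ * p := by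
  refine ⟨(q - C κ * p) /ₘ (X - C z), ?_, ?_⟩
  · rw [natDegree_divByMonic _ (monic_X_sub_C z)]
    exact (Nat.sub_le _ _).trans
      ((natDegree_sub_le_of_le hq ((natDegree_C_mul_le _ _).trans hp)).trans_eq (max_self ℓ))
  · rw [mul_divByMonic_eq_iff_isRoot.mpr (by simp [h]), sub_add_cancel]

lemma exists_eq_mul_norm_le_inv {K : Type*} [NormedField K] {x y : K} {m : ℝ} (hm : 0 < m)
    (h : y ≠ 0 → m ≤ ‖x / y‖) : ∃ κ : K, y = κ * x ∧ ‖κ‖ ≤ m⁻¹ := by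
  by_cases hy : y = 0
  · exact ⟨0, by simp [hy], by simp [hm.le]⟩
  have hx : x ≠ 0 := by
    rintro rfl
    linarith [h hy, show ‖(0 : K) / y‖ = 0 by simp]
  refine ⟨y / x, (div_mul_cancel₀ y hx).symm, ?_⟩
  rw [← inv_div, norm_inv]
  exact inv_anti₀ hm (h hy)

namespace Matrix

section L2OpNorm

variable {𝕜 : Type*} [RCLike 𝕜] {l m n : Type*} [Fintype m] [Fintype n] [DecidableEq m]

lemma l2_opNorm_mul_of_conjTranspose_mul_self_eq_one [Fintype l] [DecidableEq l]
    {U : Matrix n m 𝕜} (hU : Uᴴ * U = 1) (X : Matrix m l 𝕜) : ‖U * X‖ = ‖X‖ := by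
  refine (mul_self_inj (norm_nonneg _) (norm_nonneg _)).mp ?_
  rw [← l2_opNorm_conjTranspose_mul_self, ← l2_opNorm_conjTranspose_mul_self, conjTranspose_mul,
    Matrix.mul_assoc, ← Matrix.mul_assoc Uᴴ, hU, Matrix.one_mul]

lemma l2_opNorm_le_one_of_conjTranspose_mul_self_eq_one {U : Matrix n m 𝕜} (hU : Uᴴ * U = 1) :
    ‖U‖ ≤ 1 := by
  calc ‖U‖ = ‖(1 : Matrix m m 𝕜)‖ := by
        rw [← l2_opNorm_mul_of_conjTranspose_mul_self_eq_one hU, Matrix.mul_one]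
    _ ≤ 1 := by
        rw [← diagonal_one, l2_opNorm_diagonal]
        exact (pi_norm_le_iff_of_nonneg zero_le_one).mpr fun _ => norm_one.le

end L2OpNorm

lemma conjTranspose_mul_smul_one_add_mul {𝕜 m n : Type*} [RCLike 𝕜] [Fintype n] [DecidableEq m]
    [DecidableEq n] {U : Matrix n m 𝕜} (hU : Uᴴ * U = 1) (c : 𝕜)
    (T : Matrix n n 𝕜) : Uᴴ * (c • 1 + T) * U = c • 1 + Uᴴ * T * U := by
  simp only [Matrix.mul_add, Matrix.add_mul, Matrix.mul_smul, Matrix.smul_mul, Matrix.mul_one, hU]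

section Galerkin

variable {𝕜 : Type*} [RCLike 𝕜] {l m n : Type*} [Fintype m] [Fintype n] [DecidableEq m]
  {T : Matrix n n 𝕜} {U : Matrix n m 𝕜}

def galerkinInv (T : Matrix n n 𝕜) (U : Matrix n m 𝕜) : Matrix n n 𝕜 := U * (Uᴴ * T * U)⁻¹ * Uᴴ

lemma galerkinInv_mul_mul (hTU : IsUnit (Uᴴ * T * U)) (Z : Matrix m l 𝕜) :
    galerkinInv T U * (T * (U * Z)) = U * Z := by
  calc galerkinInv T U * (T * (U * Z)) = U * ((Uᴴ * T * U)⁻¹ * (Uᴴ * T * U)) * Z := by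
        simp only [galerkinInv, Matrix.mul_assoc]
    _ = U * Z := by
        rw [nonsing_inv_mul _ ((isUnit_iff_isUnit_det _).mp hTU), Matrix.mul_one]

lemma sub_galerkinInv_mul_eq_smul [DecidableEq n] (hT : IsUnit T) (hTU : IsUnit (Uᴴ * T * U))
    {v y : Matrix n l 𝕜} {Z : Matrix m l 𝕜} {κ : 𝕜} (hv : v = T * (U * Z) + κ • y) :
    (T⁻¹ - galerkinInv T U) * v = κ • ((T⁻¹ - galerkinInv T U) * y) := by
  have hT' : T⁻¹ * (T * (U * Z)) = U * Z := by
    rw [← Matrix.mul_assoc, nonsing_inv_mul _ ((isUnit_iff_isUnit_det _).mp hT), Matrix.one_mul]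
  rw [hv, Matrix.mul_add, Matrix.sub_mul, hT', galerkinInv_mul_mul hTU, sub_self, zero_add,
    Matrix.mul_smul]

lemma l2_opNorm_sub_galerkinInv_le [DecidableEq n] (hU : Uᴴ * U = 1) :
    ‖T⁻¹ - galerkinInv T U‖ ≤ ‖T⁻¹‖ + ‖(Uᴴ * T * U)⁻¹‖ := by
  refine (norm_sub_le _ _).trans (add_le_add le_rfl ?_)
  calc ‖galerkinInv T U‖ = ‖(Uᴴ * T * U)⁻¹ * Uᴴ‖ := by
        rw [galerkinInv, Matrix.mul_assoc, l2_opNorm_mul_of_conjTranspose_mul_self_eq_one hU]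
    _ ≤ ‖(Uᴴ * T * U)⁻¹‖ * ‖Uᴴ‖ := l2_opNorm_mul _ _
    _ ≤ ‖(Uᴴ * T * U)⁻¹‖ := by
        rw [l2_opNorm_conjTranspose]
        exact mul_le_of_le_one_right (norm_nonneg _)
          (l2_opNorm_le_one_of_conjTranspose_mul_self_eq_one hU)

lemma smul_one_add_inv_mul_sub_eq_sub_galerkinInv_mul [DecidableEq n] (hU : Uᴴ * U = 1) (c : 𝕜)
    (A : Matrix n n 𝕜) (v : Matrix n l 𝕜) :
    (c • 1 + A)⁻¹ * v - U * ((c • 1 + Uᴴ * A * U)⁻¹ * (Uᴴ * v)) =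
      ((c • 1 + A)⁻¹ - galerkinInv (c • 1 + A) U) * v := by
  rw [Matrix.sub_mul, galerkinInv, conjTranspose_mul_smul_one_add_mul hU]
  simp only [Matrix.mul_assoc]

end Galerkin

section Resolvent

variable {m n : Type*} [Fintype m] [Fintype n] [DecidableEq m] [DecidableEq n]

lemma aeval_X_sub_C_neg (H : Matrix n n ℂ) (c : ℂ) : aeval H (X - C (-c)) = c • 1 + H := by
  rw [map_sub, aeval_X, aeval_C, Algebra.algebraMap_eq_smul_one, neg_smul, sub_neg_eq_add,
    add_comm]

lemma IsHermitian.spectrum_conjTranspose_mul_mul_ge {A : Matrix n n ℂ} (hA : A.IsHermitian)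
    {U : Matrix n m ℂ} (hU : Uᴴ * U = 1) {c : ℝ} (hc : ∀ x ∈ spectrum ℝ A, c ≤ x) :
    ∀ x ∈ spectrum ℝ (Uᴴ * A * U), c ≤ x := by
  have hAc : algebraMap ℝ _ c ≤ A := (algebraMap_le_iff_le_spectrum hA.isSelfAdjoint).mpr hc
  refine (algebraMap_le_iff_le_spectrum
    (isHermitian_conjTranspose_mul_mul U hA).isSelfAdjoint).mp ?_
  have hcomp : Uᴴ * A * U - algebraMap ℝ _ c = Uᴴ * (A - algebraMap ℝ _ c) * U := by
    simp only [Matrix.mul_sub, Matrix.sub_mul, Algebra.algebraMap_eq_smul_one, Matrix.mul_smul,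
      Matrix.smul_mul, Matrix.mul_one, hU]
  rw [le_iff, hcomp]
  exact (le_iff.mp hAc).conjTranspose_mul_mul_same U

lemma IsHermitian.isUnit_smul_one_add {H : Matrix n n ℂ} (hH : H.IsHermitian) {c t : ℝ}
    (hct : 0 < t + c) (hc : ∀ x ∈ spectrum ℝ H, c ≤ x) : IsUnit ((t : ℂ) • 1 + H) := by
  rw [← aeval_X_sub_C_neg]
  refine hH.isSelfAdjoint.isUnit_aeval _ fun x hx => ?_
  rw [eval_X_sub_C_neg_ofReal, Complex.ofReal_ne_zero]
  linarith [hc x hx]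

lemma IsHermitian.l2_opNorm_inv_smul_one_add_le {H : Matrix n n ℂ} (hH : H.IsHermitian) {c t : ℝ}
    (hct : 0 < t + c) (hc : ∀ x ∈ spectrum ℝ H, c ≤ x) : ‖((t : ℂ) • 1 + H)⁻¹‖ ≤ (t + c)⁻¹ := by
  have hpos : ∀ x ∈ spectrum ℝ H, 0 < x + t := fun x hx => by linarith [hc x hx]
  have := hH.isSelfAdjoint.norm_aeval_mul_inverse_aeval_le 1 (X - C (-(t : ℂ)))
    (inv_nonneg.mpr hct.le)
    (fun x hx => by rw [eval_X_sub_C_neg_ofReal, Complex.ofReal_ne_zero]; exact (hpos x hx).ne')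
    (fun x hx => by
      rw [eval_X_sub_C_neg_ofReal, eval_one, one_div, norm_inv, Complex.norm_real,
        Real.norm_of_nonneg (hpos x hx).le]
      exact inv_anti₀ hct (by linarith [hc x hx]))
  rwa [map_one, Matrix.one_mul, aeval_X_sub_C_neg, ← nonsing_inv_eq_ringInverse] at this

lemma IsHermitian.l2_opNorm_resolvent_sub_galerkin_le {l : Type*} [Fintype l] [DecidableEq l]
    {A : Matrix n n ℂ} (hA : A.IsHermitian) {U : Matrix n m ℂ} (hU : Uᴴ * U = 1) {a t : ℝ}
    (hta : 0 < t + a) (ha : ∀ x ∈ spectrum ℝ A, a ≤ x) {v y : Matrix n l ℂ} {Z : Matrix m l ℂ}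
    {κ : ℂ} (hv : v = ((t : ℂ) • 1 + A) * (U * Z) + κ • y) :
    ‖((t : ℂ) • 1 + A)⁻¹ * v - U * (((t : ℂ) • 1 + Uᴴ * A * U)⁻¹ * (Uᴴ * v))‖ ≤
      ‖κ‖ * (2 * (t + a)⁻¹ * ‖y‖) := by
  have hAℓ := isHermitian_conjTranspose_mul_mul U hA
  have haℓ := hA.spectrum_conjTranspose_mul_mul_ge hU ha
  have hTU := conjTranspose_mul_smul_one_add_mul hU (t : ℂ) A
  rw [smul_one_add_inv_mul_sub_eq_sub_galerkinInv_mul hU, sub_galerkinInv_mul_eq_smul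
    (hA.isUnit_smul_one_add hta ha) (hTU ▸ hAℓ.isUnit_smul_one_add hta haℓ) hv, norm_smul]
  gcongr
  calc _ ≤ ‖((t : ℂ) • 1 + A)⁻¹ - galerkinInv ((t : ℂ) • 1 + A) U‖ * ‖y‖ := l2_opNorm_mul _ _
    _ ≤ ((t + a)⁻¹ + (t + a)⁻¹) * ‖y‖ := by
        gcongr
        refine (l2_opNorm_sub_galerkinInv_le hU).trans ?_
        rw [hTU]
        gcongr
        exacts [hA.l2_opNorm_inv_smul_one_add_le hta ha, hAℓ.l2_opNorm_inv_smul_one_add_le hta haℓ]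
    _ = 2 * (t + a)⁻¹ * ‖y‖ := by ring

end Resolvent

end Matrix

lemma qpoly_natDegree_le {ℓ : ℕ} (Ψ : Fin ℓ → Option ℂ) : (qpoly Ψ).natDegree ≤ ℓ := by
  refine (natDegree_prod_le _ _).trans ((Finset.sum_le_sum fun j _ => ?_).trans_eq
    (by simp : ∑ _j : Fin ℓ, 1 = ℓ))
  cases Ψ j <;> simp

lemma qpoly_eval_ne_zero {ℓ : ℕ} {Ψ : Fin ℓ → Option ℂ} {z : ℂ}
    (h : ∀ j ψ, Ψ j = some ψ → ψ ≠ z) : (qpoly Ψ).eval z ≠ 0 := by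
  rw [qpoly, eval_prod, Finset.prod_ne_zero_iff]
  intro j _
  cases hj : Ψ j with
  | none => simp
  | some ψ => simpa [sub_eq_zero] using (h j ψ hj).symm

lemma Commute.nonsing_inv_right {K n : Type*} [CommRing K] [Fintype n] [DecidableEq n]
    {A B : Matrix n n K} (h : Commute A B) : Commute A B⁻¹ := by
  by_cases hB : IsUnit B
  · lift B to (Matrix n n K)ˣ using hB
    rw [← Matrix.coe_units_inv]
    exact h.units_inv_right
  · rw [Matrix.nonsing_inv_eq_ringInverse, Ring.inverse_non_unit _ hB]
    exact Commute.zero_right A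

lemma colSpan_eq_range_mulVecLin {n m : ℕ} (U : Matrix (Fin n) (Fin m) ℂ) :
    colSpan U = LinearMap.range U.mulVecLin :=
  (Matrix.range_mulVecLin U).symm

lemma mul_conjTranspose_mul_eq_self {n m s : ℕ} {U : Matrix (Fin n) (Fin m) ℂ} (hU : Uᴴ * U = 1)
    {X : Matrix (Fin n) (Fin s) ℂ} (hX : ∀ j, Xᵀ j ∈ colSpan U) : U * (Uᴴ * X) = X := by
  simp only [colSpan_eq_range_mulVecLin, LinearMap.mem_range, Matrix.mulVecLin_apply] at hX
  choose y hy using hX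
  have hXU : X = U * (Matrix.of y)ᵀ := by
    ext i j
    simpa [Matrix.mulVec, dotProduct, Matrix.mul_apply, mul_comm] using (congrFun (hy j) i).symm
  rw [hXU, ← Matrix.mul_assoc Uᴴ, hU, Matrix.one_mul]

lemma transpose_aeval_mul_mem_RK {n s ℓ : ℕ} (A : Matrix (Fin n) (Fin n) ℂ)
    (v : Matrix (Fin n) (Fin s) ℂ) (Ψ : Fin ℓ → Option ℂ) {g : ℂ[X]} (hg : g.natDegree ≤ ℓ)
    (j : Fin s) : (aeval A g * (aeval A (qpoly Ψ))⁻¹ * v)ᵀ j ∈ RK ℓ A v Ψ := by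
  have hQ : ∀ i : ℕ, Commute (A ^ i) (aeval A (qpoly Ψ))⁻¹ := fun i => by
    simpa using ((Commute.all (X ^ i) (qpoly Ψ)).map (aeval A)).nonsing_inv_right
  have hsum : (aeval A g * (aeval A (qpoly Ψ))⁻¹ * v)ᵀ j
      = ∑ i ∈ Finset.range (ℓ + 1), g.coeff i • ((aeval A (qpoly Ψ))⁻¹ * A ^ i * v)ᵀ j := by
    rw [aeval_eq_sum_range' (Nat.lt_succ_of_le hg), Matrix.sum_mul, Matrix.sum_mul]
    ext k
    simp only [Matrix.transpose_apply, Matrix.sum_apply, Finset.sum_apply, Pi.smul_apply,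
      Matrix.smul_mul, (hQ _).eq, Matrix.smul_apply]
  rw [hsum]
  refine Submodule.sum_mem _ fun i hi => Submodule.smul_mem _ _ (Submodule.subset_span ?_)
  exact ⟨i, Nat.lt_succ_iff.mp (Finset.mem_range.mp hi), j, rfl⟩

lemma exists_eq_aeval_mul_add_smul {n s m ℓ : ℕ} {A : Matrix (Fin n) (Fin n) ℂ}
    {v : Matrix (Fin n) (Fin s) ℂ} {Ψ : Fin ℓ → Option ℂ} {U : Matrix (Fin n) (Fin m) ℂ}
    (hU : IsONBasisOf U (RK ℓ A v Ψ)) (hQ : IsUnit (aeval A (qpoly Ψ))) {P p : ℂ[X]} {z κ : ℂ}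
    (hP : P.natDegree ≤ ℓ) (h : qpoly Ψ = (X - C z) * P + C κ * p) :
    ∃ Z : Matrix (Fin m) (Fin s) ℂ,
      v = aeval A (X - C z) * (U * Z) + κ • (aeval A p * (aeval A (qpoly Ψ))⁻¹ * v) := by
  refine ⟨Uᴴ * (aeval A P * (aeval A (qpoly Ψ))⁻¹ * v), ?_⟩
  rw [mul_conjTranspose_mul_eq_self hU.1 fun j => hU.2 ▸ transpose_aeval_mul_mem_RK A v Ψ hP j]
  have hsplit : aeval A (qpoly Ψ) = aeval A (X - C z) * aeval A P + κ • aeval A p := by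
    rw [h, map_add, map_mul, C_mul', map_smul]
  calc v = aeval A (qpoly Ψ) * (aeval A (qpoly Ψ))⁻¹ * v := by
        rw [Matrix.mul_nonsing_inv _ ((Matrix.isUnit_iff_isUnit_det _).mp hQ), Matrix.one_mul]
    _ = _ := by
        nth_rw 1 [hsplit]
        simp only [Matrix.add_mul, Matrix.smul_mul, Matrix.mul_assoc]

/-- pointwise error bound for the parameter-dependent resolvent. -/
theorem rational_krylov_resolvent_bound
    {n s m ℓ : ℕ} (a b : ℝ) (ha : 0 < a) (hab : a ≤ b)
    (A : Matrix (Fin n) (Fin n) ℂ) (hA : A.PosDef)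
    (hspec : ∀ i, hA.1.eigenvalues i ∈ Set.Icc a b)
    (v : Matrix (Fin n) (Fin s) ℂ)
    (Ψ : Fin ℓ → Option ℂ)
    (hΨ : ∀ j ψ, Ψ j = some ψ → ψ ∉ spectrum ℂ A)
    (U : Matrix (Fin n) (Fin m) ℂ) (hU : IsONBasisOf U (RK ℓ A v Ψ))
    (Aℓ : Matrix (Fin m) (Fin m) ℂ) (hAℓ : Aℓ = Uᴴ * A * U)
    (vℓ : Matrix (Fin m) (Fin s) ℂ) (hvℓ : vℓ = Uᴴ * v)
    (t : ℝ) (ht : 0 ≤ t)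
    (p : Polynomial ℂ) (hp : p.natDegree ≤ ℓ)
    (M mm : ℝ) (hmm : 0 < mm)
    (hub : ∀ z : ℝ, z ∈ Set.Icc a b →
      ‖p.eval (z : ℂ) / (qpoly Ψ).eval (z : ℂ)‖ ≤ M)
    (hlb : ∀ z : ℝ, z ≤ 0 → (qpoly Ψ).eval (z : ℂ) ≠ 0 →
      mm ≤ ‖p.eval (z : ℂ) / (qpoly Ψ).eval (z : ℂ)‖) :
    norm2 (((t : ℂ) • 1 + A)⁻¹ * v - U * (((t : ℂ) • 1 + Aℓ)⁻¹ * vℓ)) ≤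
      (2 / (t + a)) * (M / mm) * norm2 v := by
  subst hAℓ hvℓ
  simp only [norm2_eq_l2_opNorm]
  have hσA : ∀ x ∈ spectrum ℝ A, x ∈ Set.Icc a b := by
    rw [hA.1.spectrum_real_eq_range_eigenvalues]
    rintro _ ⟨i, rfl⟩
    exact hspec i
  have hta : 0 < t + a := by linarith
  have hq : ∀ x ∈ spectrum ℝ A, (qpoly Ψ).eval (x : ℂ) ≠ 0 := fun x hx =>
    qpoly_eval_ne_zero fun j ψ hj hψ => hΨ j ψ hj (hψ ▸ (spectrum.algebraMap_mem_iff ℂ).mpr hx)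
  have hM : 0 ≤ M := (norm_nonneg _).trans (hub a ⟨le_rfl, hab⟩)
  have hr : ‖aeval A p * (aeval A (qpoly Ψ))⁻¹‖ ≤ M := by
    rw [nonsing_inv_eq_ringInverse]
    exact hA.1.isSelfAdjoint.norm_aeval_mul_inverse_aeval_le p _ hM hq fun x hx => hub x (hσA x hx)
  have hlb_neg := hlb (-t) (neg_nonpos.mpr ht)
  push_cast at hlb_neg
  obtain ⟨κ, hκ, hκmm⟩ := exists_eq_mul_norm_le_inv hmm hlb_neg
  obtain ⟨P, hPdeg, hP⟩ := exists_eq_X_sub_C_mul_add_C_mul (qpoly_natDegree_le Ψ) hp hκ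
  obtain ⟨Z, hv⟩ := exists_eq_aeval_mul_add_smul hU (hA.1.isSelfAdjoint.isUnit_aeval _ hq) hPdeg hP
  rw [aeval_X_sub_C_neg] at hv
  calc _ ≤ ‖κ‖ * (2 * (t + a)⁻¹ * ‖aeval A p * (aeval A (qpoly Ψ))⁻¹ * v‖) :=
        hA.1.l2_opNorm_resolvent_sub_galerkin_le hU.1 hta (fun x hx => (hσA x hx).1) hv
    _ ≤ mm⁻¹ * (2 * (t + a)⁻¹ * (M * ‖v‖)) := by
        gcongr
        exact (l2_opNorm_mul _ _).trans (by gcongr)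
    _ = 2 / (t + a) * (M / mm) * ‖v‖ := by
        field_simp
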